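/- Let f : ℕ → ℝ → ℝ be a sequence of locally integrable functions and let Φ be its germ, an internal function on the hyperreals. Assume Φ is S-continuous at every p ∈ ℝ and Φ⋆↑p is not infinite for every p ∈ ℝ, and define F : ℝ → ℝ by F p = Hyperreal.st (Φ⋆↑p). Then for every test function g, the hyperreal germ of the real sequence n ↦ ∫_ℝ (f n x - F x) * g x dx is infinitesimal. -/

import Mathlib

open MeasureTheory

/-- The action of an internal function on the hyperreals (a germ of standard
functions) on a hyperreal. -/
noncomputable def hact (Φ : Filter.Germ (Filter.hyperfilter ℕ : Filter ℕ) (ℝ → ℝ))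
    (ξ : Hyperreal) : Hyperreal :=
  Filter.Germ.map₂ (fun f t => f t) Φ ξ

/-- S-continuity of an internal function at a standard point `p`. -/
def SContinuousAt (Φ : Filter.Germ (Filter.hyperfilter ℕ : Filter ℕ) (ℝ → ℝ)) (p : ℝ) : Prop :=
  ∀ ξ : Hyperreal, Hyperreal.Infinitesimal (ξ - ↑p) →
    Hyperreal.Infinitesimal (hact Φ ξ - hact Φ ↑p)

lemma hact_ofSeq (f : ℕ → ℝ → ℝ) (x : ℕ → ℝ) :
    hact (↑f) (Hyperreal.ofSeq x) = Hyperreal.ofSeq (fun n => f n (x n)) := rfl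

lemma ofSeq_sub (a b : ℕ → ℝ) :
    Hyperreal.ofSeq a - Hyperreal.ofSeq b = Hyperreal.ofSeq (fun n => a n - b n) := rfl

lemma coe_eq_ofSeq (r : ℝ) : (r : Hyperreal) = Hyperreal.ofSeq (fun _ => r) := rfl

lemma infsml_ofSeq_iff {a : ℕ → ℝ} :
    (Hyperreal.ofSeq a).Infinitesimal ↔
      ∀ r : ℝ, 0 < r → ∀ᶠ n in (Filter.hyperfilter ℕ : Filter ℕ), |a n| < r := by
  rw [Hyperreal.infinitesimal_def]
  constructor
  · intro h r hr
    have h1 : Hyperreal.ofSeq (fun _ => -r) < Hyperreal.ofSeq a := (h r hr).1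
    have h2 : Hyperreal.ofSeq a < Hyperreal.ofSeq (fun _ => r) := (h r hr).2
    filter_upwards [Hyperreal.ofSeq_lt_ofSeq.1 h1, Hyperreal.ofSeq_lt_ofSeq.1 h2] with n e1 e2
    exact abs_lt.2 ⟨e1, e2⟩
  · intro h r hr
    have hh := h r hr
    exact ⟨Hyperreal.ofSeq_lt_ofSeq.2 (hh.mono fun n hn => (abs_lt.1 hn).1),
      Hyperreal.ofSeq_lt_ofSeq.2 (hh.mono fun n hn => (abs_lt.1 hn).2)⟩

lemma infsml_iff_abs {x : Hyperreal} :
    x.Infinitesimal ↔ ∀ δ : ℝ, 0 < δ → |x| < δ := by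
  rw [Hyperreal.Infinitesimal, Hyperreal.isSt_iff_abs_sub_lt_delta]
  simp

/-- Paper Theorem 7.3: an everywhere S-continuous, everywhere limited
internal function pairs infinitesimally with its continuous standard part:
`∫ (f - *F) g ≈ 0` for every test function `g`. -/
theorem infinitesimal_pairing_with_standard_part (f : ℕ → ℝ → ℝ)
    (hloc : ∀ n, LocallyIntegrable (f n))
    (hS : ∀ p : ℝ, SContinuousAt (↑f) p)
    (hfin : ∀ p : ℝ, ¬ (hact (↑f) (↑p)).Infinite)
    (F : ℝ → ℝ) (hF : ∀ p : ℝ, F p = (hact (↑f) (↑p)).st)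
    (g : ℝ → ℝ) (hg : ContDiff ℝ (⊤ : ℕ∞) g) (hgc : HasCompactSupport g) :
    (Hyperreal.ofSeq (fun n => ∫ x : ℝ, (f n x - F x) * g x)).Infinitesimal := by
  classical
  -- pointwise: f n q - F q is infinitesimal (as a germ)
  have hpt : ∀ q : ℝ, (Hyperreal.ofSeq (fun n => f n q - F q)).Infinitesimal := by
    intro q
    have h1 := Hyperreal.isSt_st' (hfin q)
    rw [← hF q] at h1
    have h2 := Hyperreal.isSt_iff_abs_sub_lt_delta.1 h1
    have heq : hact (↑f) (↑q) - (↑(F q) : Hyperreal)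
        = Hyperreal.ofSeq (fun n => f n q - F q) := rfl
    exact infsml_iff_abs.2 fun δ hδ => heq ▸ h2 δ hδ
  -- Key uniform estimate around each standard point
  have keyA : ∀ (p ε : ℝ), 0 < ε → ∃ δ > 0,
      ∀ᶠ n in (Filter.hyperfilter ℕ : Filter ℕ), ∀ x, |x - p| < δ → |f n x - F p| < ε := by
    intro p ε hε
    by_contra hcon
    push_neg at hcon
    set Q : ℕ → ℕ → Prop := fun n k => ∃ x, |x - p| < 1 / (k + 1) ∧ ε ≤ |f n x - F p| with hQ
    have hQU : ∀ k : ℕ, ∀ᶠ n in (Filter.hyperfilter ℕ : Filter ℕ), Q n k := by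
      intro k
      have hk : (0 : ℝ) < 1 / ((k : ℝ) + 1) := by positivity
      have := hcon (1 / ((k : ℝ) + 1)) hk
      exact this
    -- construct a sequence converging to p along the ultrafilter but with values far
    set kk : ℕ → ℕ := fun n => Nat.findGreatest (Q n) n with hkk
    set x : ℕ → ℝ := fun n => if h : Q n (kk n) then h.choose else p with hx
    have hxspec : ∀ n, Q n (kk n) →
        |x n - p| < 1 / (kk n + 1) ∧ ε ≤ |f n (x n) - F p| := by
      intro n h
      simp only [hx, dif_pos h]
      exact h.choose_spec
    have hge : ∀ m : ℕ, {n : ℕ | m ≤ n} ∈ (Filter.hyperfilter ℕ : Filter ℕ) :=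
      fun m => Nat.hyperfilter_le_atTop (Filter.eventually_ge_atTop m)
    -- ξ := ofSeq x is infinitesimally close to p
    have hxi : (Hyperreal.ofSeq x - (p : Hyperreal)).Infinitesimal := by
      rw [coe_eq_ofSeq, ofSeq_sub, infsml_ofSeq_iff]
      intro r hr
      obtain ⟨k, hk⟩ := exists_nat_gt (1 / r)
      have hk' : 1 / ((k : ℝ) + 1) < r := by
        rw [div_lt_iff₀ (by positivity)]
        rw [div_lt_iff₀ hr] at hk
        nlinarith
      filter_upwards [hQU k, hge k] with n hQn hkn
      have hkle : k ≤ kk n := Nat.le_findGreatest hkn hQn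
      have hQkk : Q n (kk n) := Nat.findGreatest_spec hkn hQn
      have h1 := (hxspec n hQkk).1
      have : 1 / ((kk n : ℝ) + 1) ≤ 1 / ((k : ℝ) + 1) := by
        apply one_div_le_one_div_of_le (by positivity)
        exact_mod_cast by omega
      calc |x n - p| < 1 / ((kk n : ℝ) + 1) := h1
        _ ≤ 1 / ((k : ℝ) + 1) := this
        _ < r := hk'
    -- S-continuity gives a contradiction
    have hs1 := hS p (Hyperreal.ofSeq x) hxi
    rw [hact_ofSeq, coe_eq_ofSeq] at hs1
    have hs1' : (Hyperreal.ofSeq (fun n => f n (x n) - f n p)).Infinitesimal := hs1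
    have hs2 := hpt p
    have hsum : (Hyperreal.ofSeq (fun n => f n (x n) - F p)).Infinitesimal := by
      have := hs1'.add hs2
      have heq : Hyperreal.ofSeq (fun n => f n (x n) - f n p)
          + Hyperreal.ofSeq (fun n => f n p - F p)
          = Hyperreal.ofSeq (fun n => f n (x n) - F p) := by
        have : (fun n => (f n (x n) - f n p) + (f n p - F p))
            = fun n => f n (x n) - F p := by
          funext n; ring
        exact this ▸ rfl
      rwa [heq] at this
    have hev := infsml_ofSeq_iff.1 hsum ε hε
    have hbad : ∀ᶠ n in (Filter.hyperfilter ℕ : Filter ℕ), ε ≤ |f n (x n) - F p| := by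
      filter_upwards [hQU 0, hge 0] with n hQn hn0
      exact (hxspec n (Nat.findGreatest_spec hn0 hQn)).2
    obtain ⟨n, h1, h2⟩ := (hev.and hbad).exists
    linarith
  -- continuity of F
  have hFd : ∀ (p ε : ℝ), 0 < ε → ∃ δ > 0, ∀ x, |x - p| < δ → |F x - F p| < ε := by
    intro p ε hε
    obtain ⟨δ, hδ, hA⟩ := keyA p (ε / 2) (by linarith)
    refine ⟨δ, hδ, fun x hxδ => ?_⟩
    have hx := infsml_ofSeq_iff.1 (hpt x) (ε / 2) (by linarith)
    obtain ⟨n, h1, h2⟩ := (hA.and hx).exists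
    have := h1 x hxδ
    calc |F x - F p| ≤ |F x - f n x| + |f n x - F p| := abs_sub_le _ _ _
      _ = |f n x - F x| + |f n x - F p| := by rw [abs_sub_comm]
      _ < ε / 2 + ε / 2 := by linarith
      _ = ε := by ring
  have hFc : Continuous F := by
    rw [Metric.continuous_iff]
    intro p ε hε
    obtain ⟨δ, hδ, h⟩ := hFd p ε hε
    exact ⟨δ, hδ, fun x hx => by rw [Real.dist_eq] at *; exact h x hx⟩
  -- combined uniform estimate: f n x close to F x near each p
  have keyB : ∀ (p ε : ℝ), 0 < ε → ∃ δ > 0,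
      ∀ᶠ n in (Filter.hyperfilter ℕ : Filter ℕ), ∀ x, |x - p| < δ → |f n x - F x| < ε := by
    intro p ε hε
    obtain ⟨δ₁, hδ₁, hA⟩ := keyA p (ε / 2) (by linarith)
    obtain ⟨δ₂, hδ₂, hB⟩ := hFd p (ε / 2) (by linarith)
    refine ⟨min δ₁ δ₂, lt_min hδ₁ hδ₂, hA.mono fun n hn x hx => ?_⟩
    have h1 := hn x (lt_of_lt_of_le hx (min_le_left _ _))
    have h2 := hB x (lt_of_lt_of_le hx (min_le_right _ _))
    calc |f n x - F x| ≤ |f n x - F p| + |F p - F x| := abs_sub_le _ _ _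
      _ = |f n x - F p| + |F x - F p| := by rw [abs_sub_comm (F p)]
      _ < ε / 2 + ε / 2 := by linarith
      _ = ε := by ring
  -- main estimate via compactness of the support of g
  rw [infsml_ofSeq_iff]
  intro r hr
  set T : ℝ := ∫ y : ℝ, |g y| with hT
  have hT0 : 0 ≤ T := integral_nonneg fun y => abs_nonneg _
  set ε : ℝ := r / (T + 1) with hε
  have hε0 : 0 < ε := by positivity
  have hεT : ε * T < r := by
    rw [hε, div_mul_eq_mul_div, div_lt_iff₀ (by linarith)]
    nlinarith
  set K : Set ℝ := tsupport g with hK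
  have hKc : IsCompact K := hgc
  choose δ hδ hA using fun p : ℝ => keyB p ε hε0
  have hcover : K ⊆ ⋃ p : ℝ, Metric.ball p (δ p) := fun y _ =>
    Set.mem_iUnion.2 ⟨y, Metric.mem_ball_self (hδ y)⟩
  obtain ⟨t, ht⟩ := hKc.elim_finite_subcover (fun p : ℝ => Metric.ball p (δ p))
    (fun p => Metric.isOpen_ball) hcover
  have hAll : ∀ᶠ n in (Filter.hyperfilter ℕ : Filter ℕ),
      ∀ p ∈ t, ∀ x, |x - p| < δ p → |f n x - F x| < ε :=
    Filter.eventually_all_finset t |>.2 fun p _ => hA p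
  filter_upwards [hAll] with n hn
  -- for this n, bound the integral
  have hbound : ∀ y : ℝ, y ∈ K → |f n y - F y| < ε := by
    intro y hy
    obtain ⟨p, hp, hyp⟩ := Set.mem_iUnion₂.1 (ht hy)
    rw [Metric.mem_ball, Real.dist_eq] at hyp
    exact hn p hp y hyp
  have hgcont : Continuous g := hg.continuous
  have i1 : Integrable (fun y => f n y * g y) := by
    simpa [smul_eq_mul] using
      (hloc n).integrable_smul_right_of_hasCompactSupport hgcont hgc
  have i2 : Integrable (fun y => F y * g y) := by
    simpa [smul_eq_mul] using
      hFc.locallyIntegrable.integrable_smul_right_of_hasCompactSupport hgcont hgc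
  have hint : Integrable (fun y => (f n y - F y) * g y) := by
    have := i1.sub i2
    simpa [sub_mul, Pi.sub_def] using this
  have hgabs : Integrable (fun y => ε * |g y|) := by
    have : Integrable (fun y => |g y|) :=
      (hgcont.abs.integrable_of_hasCompactSupport hgc.abs)
    exact this.const_mul ε
  have hptwise : ∀ y : ℝ, |(f n y - F y) * g y| ≤ ε * |g y| := by
    intro y
    rw [abs_mul]
    by_cases hy : g y = 0
    · simp [hy]
    · have hyK : y ∈ K := subset_tsupport g hy
      exact mul_le_mul_of_nonneg_right (le_of_lt (hbound y hyK)) (abs_nonneg _)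
  calc |∫ y : ℝ, (f n y - F y) * g y| ≤ ∫ y : ℝ, |(f n y - F y) * g y| := by
        simpa only [Real.norm_eq_abs] using
          norm_integral_le_integral_norm fun y => (f n y - F y) * g y
    _ ≤ ∫ y : ℝ, ε * |g y| := integral_mono hint.abs hgabs hptwise
    _ = ε * T := by rw [hT, integral_const_mul]
    _ < r := hεT
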